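/- arXiv:2107.11701 — 4 statements merged into one kernel-verified Lean document; each statement's English description precedes it below -/
import Mathlib

section
/- Let l ≥ 1 be a natural number, let g : (0,∞) → ℝ be twice continuously differentiable, and define u : ℝ² \ {0} → ℝ by u(x) = g(‖x‖)·T_l(x₁/‖x‖), so that in polar coordinates u(r cos θ, r sin θ) = g(r)·cos(l θ). Then u satisfies the modified Helmholtz equation Δu(x) = u(x) for all x ≠ 0 if and only if g satisfies the modified Bessel differential equation of order l, r²·g''(r) + r·g'(r) − (r² + l²)·g(r) = 0, for all r > 0. -/
open Real

/-- The Euclidean Laplacian: sum of second partial derivatives along coordinate directions. -/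
noncomputable def laplacian {d : ℕ} (f : EuclideanSpace ℝ (Fin d) → ℝ)
    (x : EuclideanSpace ℝ (Fin d)) : ℝ :=
  ∑ i : Fin d, fderiv ℝ (fun y => fderiv ℝ f y (EuclideanSpace.single i 1)) x
    (EuclideanSpace.single i 1)

/-!
Along the coordinate line `t ↦ x + t • eᵢ` the function `g ‖y‖ * P (y j / ‖y‖)` is a composite of
one-variable functions, so the chain and product rules give its second derivative; it is a
quadratic polynomial in `x i` and `δᵢⱼ`, and summing over `i` with `∑ xᵢ² = ‖x‖²` gives, with
`r = ‖x‖` and `c = x j / r`,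
`Δ (g(r) P(c)) = (g'' + (d - 1) g' / r) P(c) + g ((1 - c²) P''(c) - (d - 1) c P'(c)) / r²`.
For `d = 2` and `P = T_l` the Chebyshev equation `(1 - c²) T_l'' - c T_l' = -l² T_l` turns this into
`Δu - u = (r² g'' + r g' - (r² + l²) g) T_l(c) / r²`. One direction follows at once, the other by
looking at `x = r e₀`, where `T_l(1) = 1`.
-/

open Filter Topology
open scoped RealInnerProductSpace

def HasSecondDerivAt (f f' : ℝ → ℝ) (f'' x : ℝ) : Prop :=
  (∀ᶠ y in 𝓝 x, HasDerivAt f (f' y) y) ∧ HasDerivAt f' f'' x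

namespace HasSecondDerivAt

variable {f f' h h' : ℝ → ℝ} {f'' h'' x : ℝ}

theorem hasDerivAt (hf : HasSecondDerivAt f f' f'' x) : HasDerivAt f (f' x) x :=
  hf.1.self_of_nhds

theorem deriv_deriv (hf : HasSecondDerivAt f f' f'' x) : deriv (deriv f) x = f'' := by
  have hderiv : deriv f =ᶠ[𝓝 x] f' := hf.1.mono fun _ hy => hy.deriv
  rw [hderiv.deriv_eq]
  exact hf.2.deriv

theorem mul (hf : HasSecondDerivAt f f' f'' x) (hh : HasSecondDerivAt h h' h'' x) :
    HasSecondDerivAt (fun y => f y * h y) (fun y => f' y * h y + f y * h' y)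
      (f'' * h x + 2 * (f' x * h' x) + f x * h'') x := by
  refine ⟨?_, ?_⟩
  · filter_upwards [hf.1, hh.1] with y hfy hhy using hfy.mul hhy
  · exact ((hf.2.mul hh.hasDerivAt).add (hf.hasDerivAt.mul hh.2)).congr_deriv (by ring)

theorem comp_of_eq {φ φ' : ℝ → ℝ} {φ'' y : ℝ} (hφ : HasSecondDerivAt φ φ' φ'' y)
    (hf : HasSecondDerivAt f f' f'' x) (hy : f x = y) :
    HasSecondDerivAt (fun t => φ (f t)) (fun t => φ' (f t) * f' t)
      (φ'' * f' x ^ 2 + φ' y * f'') x := by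
  subst hy
  refine ⟨?_, ?_⟩
  · filter_upwards [hf.1, hf.hasDerivAt.continuousAt.eventually hφ.1] with t hft hφt
      using hφt.comp t hft
  · exact ((hφ.2.comp x hf.hasDerivAt).mul hf.2).congr_deriv
      (by simp only [Function.comp_apply]; ring)

end HasSecondDerivAt

theorem ContDiffAt.hasSecondDerivAt {f : ℝ → ℝ} {x : ℝ} (hf : ContDiffAt ℝ 2 f x) :
    HasSecondDerivAt f (deriv f) (deriv (deriv f) x) x := by
  refine ⟨(hf.eventually (by simp)).mono fun y hy =>
    (hy.differentiableAt (by norm_num)).hasDerivAt, ?_⟩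
  have : DifferentiableAt ℝ (fun y => fderiv ℝ f y 1) x :=
    ((hf.fderiv_right (m := 1) (by norm_num)).differentiableAt one_ne_zero).clm_apply
      (differentiableAt_const 1)
  exact this.hasDerivAt

theorem hasSecondDerivAt_inv {x : ℝ} (hx : x ≠ 0) :
    HasSecondDerivAt (·⁻¹) (fun y => -(y ^ 2)⁻¹) (2 * (x ^ 3)⁻¹) x := by
  refine ⟨(eventually_ne_nhds hx).mono fun y hy => hasDerivAt_inv hy, ?_⟩
  refine ((hasDerivAt_pow 2 x).inv (pow_ne_zero 2 hx)).neg.congr_deriv ?_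
  field_simp
  ring

theorem hasSecondDerivAt_affine (a b x : ℝ) :
    HasSecondDerivAt (fun t => a + t * b) (fun _ => b) 0 x :=
  ⟨.of_forall fun y => by simpa using ((hasDerivAt_id y).mul_const b).const_add a,
    hasDerivAt_const x b⟩

theorem HasSecondDerivAt.div {f f' h h' : ℝ → ℝ} {f'' h'' x : ℝ}
    (hf : HasSecondDerivAt f f' f'' x) (hh : HasSecondDerivAt h h' h'' x) (hx : h x ≠ 0) :
    HasSecondDerivAt (fun y => f y / h y)
      (fun y => f' y * (h y)⁻¹ + f y * (-(h y ^ 2)⁻¹ * h' y))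
      (f'' * (h x)⁻¹ + 2 * (f' x * (-(h x ^ 2)⁻¹ * h' x))
        + f x * (2 * (h x ^ 3)⁻¹ * h' x ^ 2 + -(h x ^ 2)⁻¹ * h'')) x := by
  simpa only [div_eq_mul_inv] using hf.mul ((hasSecondDerivAt_inv hx).comp_of_eq hh rfl)

theorem hasDerivAt_add_smul {E : Type*} [NormedAddCommGroup E] [NormedSpace ℝ E] (x v : E)
    (t : ℝ) : HasDerivAt (fun t : ℝ => x + t • v) v t := by
  simpa using ((hasDerivAt_id t).smul_const v).const_add x

theorem HasDerivAt.norm {E : Type*} [NormedAddCommGroup E] [InnerProductSpace ℝ E]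
    {f : ℝ → E} {f' : E} {x : ℝ} (hf : HasDerivAt f f' x) (h0 : f x ≠ 0) :
    HasDerivAt (fun t => ‖f t‖) (⟪f x, f'⟫ / ‖f x‖) x := by
  have h := hf.norm_sq.sqrt (by positivity)
  simp only [Real.sqrt_sq (norm_nonneg _)] at h
  convert h using 1
  field_simp

theorem hasSecondDerivAt_norm_add_smul {E : Type*} [NormedAddCommGroup E] [InnerProductSpace ℝ E]
    {x : E} (v : E) (hx : x ≠ 0) :
    HasSecondDerivAt (fun t : ℝ => ‖x + t • v‖) (fun t => ⟪x + t • v, v⟫ / ‖x + t • v‖)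
      ((‖v‖ ^ 2 - (⟪x, v⟫ / ‖x‖) ^ 2) / ‖x‖) 0 := by
  have hline := hasDerivAt_add_smul x v
  have hx0 : x + (0 : ℝ) • v ≠ 0 := by simpa using hx
  refine ⟨((hline 0).continuousAt.eventually_ne hx0).mono fun t ht => (hline t).norm ht, ?_⟩
  have h := ((hline 0).inner ℝ (hasDerivAt_const (0 : ℝ) v)).div ((hline 0).norm hx0)
    (norm_ne_zero_iff.2 hx0)
  simp only [zero_smul, add_zero, inner_zero_right, zero_add, real_inner_self_eq_norm_sq] at h
  refine h.congr_deriv ?_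
  have hr := norm_ne_zero_iff.2 hx
  field_simp

theorem fderiv_fderiv_apply_eq_deriv_deriv {E F : Type*} [NormedAddCommGroup E] [NormedSpace ℝ E]
    [NormedAddCommGroup F] [NormedSpace ℝ F] {f : E → F} {x : E} (v : E)
    (hf : ContDiffAt ℝ 2 f x) :
    fderiv ℝ (fun y => fderiv ℝ f y v) x v = deriv (deriv fun t : ℝ => f (x + t • v)) 0 := by
  have hline := hasDerivAt_add_smul x v
  have hx0 : x + (0 : ℝ) • v = x := by simp
  have hdiff : ∀ᶠ y in 𝓝 x, DifferentiableAt ℝ f y :=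
    (hf.eventually (by simp)).mono fun y hy => hy.differentiableAt (by norm_num)
  have hfirst : (fun t : ℝ => fderiv ℝ f (x + t • v) v) =ᶠ[𝓝 0] deriv fun t => f (x + t • v) := by
    have : ∀ᶠ t in 𝓝 (0 : ℝ), DifferentiableAt ℝ f (x + t • v) :=
      (hline 0).continuousAt.eventually (by simpa using hdiff)
    filter_upwards [this] with t ht using ((ht.hasFDerivAt.comp_hasDerivAt t (hline t)).deriv).symm
  have hsecond : DifferentiableAt ℝ (fun y => fderiv ℝ f y v) x :=
    ((hf.fderiv_right (m := 1) (by norm_num)).differentiableAt one_ne_zero).clm_apply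
      (differentiableAt_const v)
  rw [← hfirst.deriv_eq]
  exact ((hsecond.hasFDerivAt.comp_hasDerivAt_of_eq 0 (hline 0) hx0.symm).deriv).symm

theorem laplacian_eq_sum_deriv_deriv {d : ℕ} {f : EuclideanSpace ℝ (Fin d) → ℝ}
    {x : EuclideanSpace ℝ (Fin d)} (hf : ContDiffAt ℝ 2 f x) :
    laplacian f x = ∑ i, deriv (deriv fun t : ℝ => f (x + t • EuclideanSpace.single i 1)) 0 :=
  Finset.sum_congr rfl fun _ _ => fderiv_fderiv_apply_eq_deriv_deriv _ hf

theorem Filter.EventuallyEq.laplacian_eq {d : ℕ} {f h : EuclideanSpace ℝ (Fin d) → ℝ}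
    {x : EuclideanSpace ℝ (Fin d)} (hfh : f =ᶠ[𝓝 x] h) : laplacian f x = laplacian h x := by
  refine Finset.sum_congr rfl fun i _ => ?_
  have : (fun y => fderiv ℝ f y (EuclideanSpace.single i 1)) =ᶠ[𝓝 x]
      fun y => fderiv ℝ h y (EuclideanSpace.single i 1) :=
    (hfh.fderiv (𝕜 := ℝ)).mono fun y hy => by simp only [hy]
  rw [this.fderiv_eq]

theorem deriv_deriv_radial_mul_angular_line {E : Type*} [NormedAddCommGroup E]
    [InnerProductSpace ℝ E] {g P : ℝ → ℝ} {x : E} (v : E) (ℓ : E →L[ℝ] ℝ) (hx : x ≠ 0)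
    (hg : ContDiffAt ℝ 2 g ‖x‖) (hP : ContDiffAt ℝ 2 P (ℓ x / ‖x‖)) :
    deriv (deriv fun t : ℝ => g ‖x + t • v‖ * P (ℓ (x + t • v) / ‖x + t • v‖)) 0 =
      -- `ρ', ρ''` and `c', c''` are the derivatives at `t = 0` of `ρ t = ‖x + t • v‖` and of
      -- `ℓ (x + t • v) / ρ t`; differentiate `ρ ^ 2 = ‖x + t • v‖ ^ 2` and `ℓ (x + t • v) = c ρ`.
      let r := ‖x‖
      let c := ℓ x / r
      let ρ' := ⟪x, v⟫ / r
      let ρ'' := (‖v‖ ^ 2 - ρ' ^ 2) / r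
      let c' := (ℓ v - c * ρ') / r
      let c'' := -(2 * c' * ρ' + c * ρ'') / r
      (deriv (deriv g) r * ρ' ^ 2 + deriv g r * ρ'') * P c
        + 2 * (deriv g r * ρ') * (deriv P c * c')
        + g r * (deriv (deriv P) c * c' ^ 2 + deriv P c * c'') := by
  have hx0 : x + (0 : ℝ) • v = x := by simp
  have hρ := hasSecondDerivAt_norm_add_smul v hx
  have hm : HasSecondDerivAt (fun t : ℝ => ℓ (x + t • v)) (fun _ => ℓ v) 0 0 := by
    convert hasSecondDerivAt_affine (ℓ x) (ℓ v) 0 using 1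
    funext t
    simp
  have hc := hm.div hρ (by rw [hx0]; exact norm_ne_zero_iff.2 hx)
  rw [((hg.hasSecondDerivAt.comp_of_eq hρ (by simp)).mul
    (hP.hasSecondDerivAt.comp_of_eq hc (by simp))).deriv_deriv]
  simp only [hx0]
  have hr := norm_ne_zero_iff.2 hx
  field_simp
  ring

theorem laplacian_radial_mul_angular {d : ℕ} {g P : ℝ → ℝ} {x : EuclideanSpace ℝ (Fin d)}
    (j : Fin d) (hx : x ≠ 0) (hg : ContDiffAt ℝ 2 g ‖x‖) (hP : ContDiffAt ℝ 2 P (x j / ‖x‖)) :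
    laplacian (fun y => g ‖y‖ * P (y j / ‖y‖)) x =
      (deriv (deriv g) ‖x‖ + (d - 1) / ‖x‖ * deriv g ‖x‖) * P (x j / ‖x‖)
        + g ‖x‖ / ‖x‖ ^ 2 * ((1 - (x j / ‖x‖) ^ 2) * deriv (deriv P) (x j / ‖x‖)
          - (d - 1) * (x j / ‖x‖) * deriv P (x j / ‖x‖)) := by
  have hr : ‖x‖ ≠ 0 := norm_ne_zero_iff.2 hx
  have hU : ContDiffAt ℝ 2 (fun y => g ‖y‖ * P (y j / ‖y‖)) x := by
    have hnorm : ContDiffAt ℝ 2 (fun y : EuclideanSpace ℝ (Fin d) => ‖y‖) x := contDiffAt_norm ℝ hx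
    exact (hg.comp x hnorm).mul
      (hP.comp x (((EuclideanSpace.proj j).contDiff.contDiffAt).div hnorm hr))
  rw [laplacian_eq_sum_deriv_deriv hU]
  set r := ‖x‖
  set c := x j / r
  set δ : Fin d → ℝ := fun i => if j = i then 1 else 0
  set G := g r
  set G₁ := deriv g r
  set G₂ := deriv (deriv g) r
  set P₀ := P c
  set P₁ := deriv P c
  set P₂ := deriv (deriv P) c
  have hterm : ∀ i, deriv (deriv fun t : ℝ => g ‖x + t • EuclideanSpace.single i 1‖ *
      P ((x + t • EuclideanSpace.single i 1 : EuclideanSpace ℝ (Fin d)) j /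
        ‖x + t • EuclideanSpace.single i 1‖)) 0 =
      (G₁ * P₀ / r - G * P₁ * c / r ^ 2)
        + (G₂ * P₀ / r ^ 2 - G₁ * P₀ / r ^ 3 - 2 * G₁ * P₁ * c / r ^ 3
            + G * (P₂ * c ^ 2 + 3 * P₁ * c) / r ^ 4) * x i ^ 2
        + (2 * G₁ * P₁ / r ^ 2 - 2 * G * (P₂ * c + P₁) / r ^ 3) * (x i * δ i)
        + G * P₂ / r ^ 2 * δ i ^ 2 := by
    intro i
    refine (deriv_deriv_radial_mul_angular_line (EuclideanSpace.single i 1)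
      (EuclideanSpace.proj j) hx hg hP).trans ?_
    simp only [EuclideanSpace.inner_single_right, PiLp.norm_single, PiLp.proj_apply,
      PiLp.single_apply, norm_one, one_pow, one_mul, conj_trivial]
    rw [show (if j = i then (1 : ℝ) else 0) = δ i from rfl]
    simp only [r, c, G, G₁, G₂, P₀, P₁, P₂]
    field_simp
    ring
  have hxδ : ∑ i, x i * δ i = x j := by simp [δ]
  have hδ : ∑ i, δ i ^ 2 = 1 := by simp [δ]
  rw [Finset.sum_congr rfl fun i _ => hterm i]
  simp only [Finset.sum_add_distrib, ← Finset.mul_sum, Finset.sum_const, Finset.card_univ,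
    Fintype.card_fin, nsmul_eq_mul, hxδ, hδ, ← EuclideanSpace.real_norm_sq_eq]
  simp only [r, c, G, G₁, G₂, P₀, P₁, P₂]
  field_simp
  ring

theorem one_sub_sq_mul_deriv_deriv_chebyshevT_eval (n : ℤ) (c : ℝ) :
    (1 - c ^ 2) * deriv (deriv fun y => (Polynomial.Chebyshev.T ℝ n).eval y) c
      - c * deriv (fun y => (Polynomial.Chebyshev.T ℝ n).eval y) c
      = -(n ^ 2 * (Polynomial.Chebyshev.T ℝ n).eval c) := by
  have hderiv : ∀ p : Polynomial ℝ, deriv (fun y => p.eval y) = fun y => p.derivative.eval y :=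
    fun p => funext fun _ => p.deriv
  have h := congrArg (Polynomial.eval c)
    (Polynomial.Chebyshev.one_sub_X_sq_mul_derivative_derivative_T_eq_poly_in_T (R := ℝ) n)
  simp only [Function.iterate_succ, Function.iterate_zero, Function.comp_apply, id,
    Polynomial.eval_mul, Polynomial.eval_sub, Polynomial.eval_pow, Polynomial.eval_one,
    Polynomial.eval_X, Polynomial.eval_intCast] at h
  rw [hderiv, hderiv]
  linear_combination h

theorem laplacian_radial_mul_chebyshevT (n : ℤ) {g : ℝ → ℝ} {x : EuclideanSpace ℝ (Fin 2)}
    (hx : x ≠ 0) (hg : ContDiffAt ℝ 2 g ‖x‖) :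
    laplacian (fun y => g ‖y‖ * (Polynomial.Chebyshev.T ℝ n).eval (y 0 / ‖y‖)) x =
      (deriv (deriv g) ‖x‖ + deriv g ‖x‖ / ‖x‖ - n ^ 2 / ‖x‖ ^ 2 * g ‖x‖)
        * (Polynomial.Chebyshev.T ℝ n).eval (x 0 / ‖x‖) := by
  have hT : ContDiff ℝ 2 fun y => (Polynomial.Chebyshev.T ℝ n).eval y := by
    simpa using (Polynomial.Chebyshev.T ℝ n).contDiff_aeval (𝕜 := ℝ) 2
  rw [laplacian_radial_mul_angular 0 hx hg hT.contDiffAt]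
  have hode := one_sub_sq_mul_deriv_deriv_chebyshevT_eval n (x 0 / ‖x‖)
  simp only [Nat.cast_ofNat]
  linear_combination g ‖x‖ / ‖x‖ ^ 2 * hode

theorem mode_modified_helmholtz_iff_bessel_general (l : ℕ) (g : ℝ → ℝ)
    (hg : ContDiffOn ℝ 2 g (Set.Ioi 0))
    (u : EuclideanSpace ℝ (Fin 2) → ℝ)
    (hu : ∀ x : EuclideanSpace ℝ (Fin 2), x ≠ 0 →
      u x = g ‖x‖ * (Polynomial.Chebyshev.T ℝ (l : ℤ)).eval (x 0 / ‖x‖)) :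
    (∀ x : EuclideanSpace ℝ (Fin 2), x ≠ 0 → laplacian u x = u x) ↔
      ∀ r : ℝ, 0 < r →
        r ^ 2 * deriv (deriv g) r + r * deriv g r - (r ^ 2 + (l : ℝ) ^ 2) * g r = 0 := by
  have hlap : ∀ x : EuclideanSpace ℝ (Fin 2), x ≠ 0 → laplacian u x =
      (deriv (deriv g) ‖x‖ + deriv g ‖x‖ / ‖x‖ - (l : ℝ) ^ 2 / ‖x‖ ^ 2 * g ‖x‖)
        * (Polynomial.Chebyshev.T ℝ l).eval (x 0 / ‖x‖) := fun x hx => by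
    have hux : u =ᶠ[𝓝 x] fun y => g ‖y‖ * (Polynomial.Chebyshev.T ℝ l).eval (y 0 / ‖y‖) :=
      (eventually_ne_nhds hx).mono hu
    rw [hux.laplacian_eq, laplacian_radial_mul_chebyshevT _ hx
      (hg.contDiffAt (Ioi_mem_nhds (norm_pos_iff.2 hx)))]
    rw [Int.cast_natCast]
  constructor
  · intro h r hr
    have hx : EuclideanSpace.single 0 r ≠ (0 : EuclideanSpace ℝ (Fin 2)) := by simp [hr.ne']
    have := h _ hx
    rw [hlap _ hx, hu _ hx] at this
    simp only [PiLp.norm_single, norm_eq_abs, abs_of_pos hr, PiLp.single_eq_same,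
      div_self hr.ne', Polynomial.Chebyshev.T_eval_one, mul_one] at this
    field_simp at this
    linear_combination this
  · intro h x hx
    have hr := norm_pos_iff.2 hx
    rw [hlap x hx, hu x hx]
    congr 1
    field_simp
    linear_combination h ‖x‖ hr

/-- The l-th angular mode u(x) = g(‖x‖)·T_l(x₁/‖x‖) (i.e. g(r)cos(lθ) in polar
coordinates, with T_l the Chebyshev polynomial of the first kind) satisfies the modified
Helmholtz equation Δu = u on ℝ² \ {0} iff g satisfies the modified Bessel equation of
order l: r² g'' + r g' − (r² + l²) g = 0 on (0,∞). -/
theorem mode_modified_helmholtz_iff_bessel (l : ℕ) (hl : 1 ≤ l) (g : ℝ → ℝ)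
    (hg : ContDiffOn ℝ 2 g (Set.Ioi 0))
    (u : EuclideanSpace ℝ (Fin 2) → ℝ)
    (hu : ∀ x : EuclideanSpace ℝ (Fin 2), x ≠ 0 →
      u x = g ‖x‖ * (Polynomial.Chebyshev.T ℝ (l : ℤ)).eval (x 0 / ‖x‖)) :
    (∀ x : EuclideanSpace ℝ (Fin 2), x ≠ 0 → laplacian u x = u x) ↔
      ∀ r : ℝ, 0 < r →
        r ^ 2 * deriv (deriv g) r + r * deriv g r - (r ^ 2 + (l : ℝ) ^ 2) * g r = 0 :=
  mode_modified_helmholtz_iff_bessel_general l g hg u hu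
end

section
/- Let x(α, t) = (X(α,t), Y(α,t)) be a twice continuously differentiable map from ℝ² to ℝ², set s_α(α,t) = ‖∂_α x(α,t)‖ and assume s_α > 0 everywhere. Let θ(α,t) be a continuously differentiable function with ∂_α x = s_α·(cos θ, sin θ), define the unit tangent ŝ = (cos θ, sin θ) and unit normal n̂ = (sin θ, −cos θ), and suppose the motion satisfies ∂_t x = V·n̂ + T·ŝ for continuously differentiable functions V(α,t) and T(α,t). Then the tangent angle evolves according to s_α·∂_t θ = T·∂_α θ − ∂_α V, i.e. θ_t = (θ_α T − V_α)/s_α. -/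
/-!
Differentiate the identity `n̂ · x_α = 0` in `t`; this avoids differentiating `s_α`. Since
`∂_t n̂ = θ_t ŝ` and `x_α = s_α ŝ`, it gives `s_α θ_t = -n̂ · x_αt`. By symmetry of the mixed
partials, `x_αt = x_tα = ∂_α (V n̂ + T ŝ)`, and as `∂_α n̂ = θ_α ŝ`, `∂_α ŝ = -θ_α n̂`, its normal
component is `V_α - T θ_α`.
-/

open Real Function

section PartialDerivatives

variable {E : Type*} [NormedAddCommGroup E] [NormedSpace ℝ E]

theorem DifferentiableAt.hasDerivAt_left {g : ℝ × ℝ → E} {a b : ℝ}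
    (hg : DifferentiableAt ℝ g (a, b)) :
    HasDerivAt (fun x => g (x, b)) (fderiv ℝ g (a, b) (1, 0)) a :=
  hg.hasFDerivAt.comp_hasDerivAt (f := fun x => (x, b)) a
    ((hasDerivAt_id a).prodMk (hasDerivAt_const a b))

theorem DifferentiableAt.hasDerivAt_right {g : ℝ × ℝ → E} {a b : ℝ}
    (hg : DifferentiableAt ℝ g (a, b)) :
    HasDerivAt (fun y => g (a, y)) (fderiv ℝ g (a, b) (0, 1)) b :=
  hg.hasFDerivAt.comp_hasDerivAt (f := fun y => (a, y)) b
    ((hasDerivAt_const b a).prodMk (hasDerivAt_id b))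

variable {f : ℝ → ℝ → E}

theorem ContDiff.hasDerivAt_deriv_left_right (hf : ContDiff ℝ 2 (uncurry f)) (a b : ℝ) :
    HasDerivAt (fun y => deriv (fun x => f x y) a)
      (fderiv ℝ (fderiv ℝ (uncurry f)) (a, b) (0, 1) (1, 0)) b := by
  have hdf : Differentiable ℝ (uncurry f) := hf.differentiable (by norm_num)
  have hdf' : Differentiable ℝ (fderiv ℝ (uncurry f)) :=
    (hf.fderiv_right (by norm_num)).differentiable one_ne_zero
  have hpartial : (fun y => deriv (fun x => f x y) a) =
      fun y => fderiv ℝ (uncurry f) (a, y) (1, 0) :=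
    funext fun y => (hdf (a, y)).hasDerivAt_left.deriv
  rw [hpartial]
  simpa using (hdf' (a, b)).hasDerivAt_right.clm_apply (hasDerivAt_const b ((1 : ℝ), (0 : ℝ)))

theorem ContDiff.hasDerivAt_deriv_right_left (hf : ContDiff ℝ 2 (uncurry f)) (a b : ℝ) :
    HasDerivAt (fun x => deriv (fun y => f x y) b)
      (fderiv ℝ (fderiv ℝ (uncurry f)) (a, b) (1, 0) (0, 1)) a := by
  have hdf : Differentiable ℝ (uncurry f) := hf.differentiable (by norm_num)
  have hdf' : Differentiable ℝ (fderiv ℝ (uncurry f)) :=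
    (hf.fderiv_right (by norm_num)).differentiable one_ne_zero
  have hpartial : (fun x => deriv (fun y => f x y) b) =
      fun x => fderiv ℝ (uncurry f) (x, b) (0, 1) :=
    funext fun x => (hdf (x, b)).hasDerivAt_right.deriv
  rw [hpartial]
  simpa using (hdf' (a, b)).hasDerivAt_left.clm_apply (hasDerivAt_const a ((0 : ℝ), (1 : ℝ)))

theorem ContDiff.deriv_deriv_comm (hf : ContDiff ℝ 2 (uncurry f)) (a b : ℝ) :
    deriv (fun y => deriv (fun x => f x y) a) b = deriv (fun x => deriv (fun y => f x y) b) a := by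
  rw [(hf.hasDerivAt_deriv_left_right a b).deriv, (hf.hasDerivAt_deriv_right_left a b).deriv]
  exact (hf.contDiffAt.isSymmSndFDerivAt (by simp)).eq _ _

end PartialDerivatives

section MovingFrame

variable {φ : ℝ → ℝ} {t : ℝ}

theorem mul_deriv_eq_of_eq_polar {u v r : ℝ → ℝ} (hu : DifferentiableAt ℝ u t)
    (hv : DifferentiableAt ℝ v t) (hφ : DifferentiableAt ℝ φ t)
    (hu_eq : ∀ s, u s = r s * cos (φ s)) (hv_eq : ∀ s, v s = r s * sin (φ s)) :
    r t * deriv φ t = cos (φ t) * deriv v t - sin (φ t) * deriv u t := by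
  have hzero : (fun s => cos (φ s) * v s - sin (φ s) * u s) = fun _ => 0 := by
    funext s; rw [hu_eq, hv_eq]; ring
  have hderiv : HasDerivAt (fun s => cos (φ s) * v s - sin (φ s) * u s)
      ((-sin (φ t) * deriv φ t * v t + cos (φ t) * deriv v t)
        - (cos (φ t) * deriv φ t * u t + sin (φ t) * deriv u t)) t :=
    (hφ.hasDerivAt.cos.mul hv.hasDerivAt).sub (hφ.hasDerivAt.sin.mul hu.hasDerivAt)
  rw [hzero] at hderiv
  have := hderiv.unique (hasDerivAt_const t 0)
  rw [hu_eq, hv_eq] at this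
  linear_combination -this - r t * deriv φ t * sin_sq_add_cos_sq (φ t)

theorem cos_mul_deriv_sub_sin_mul_deriv_eq {V T : ℝ → ℝ} (hV : DifferentiableAt ℝ V t)
    (hT : DifferentiableAt ℝ T t) (hφ : DifferentiableAt ℝ φ t) :
    cos (φ t) * deriv (fun s => -(V s * cos (φ s)) + T s * sin (φ s)) t
      - sin (φ t) * deriv (fun s => V s * sin (φ s) + T s * cos (φ s)) t
      = T t * deriv φ t - deriv V t := by
  have hx : HasDerivAt (fun s => V s * sin (φ s) + T s * cos (φ s)) _ t :=
    (hV.hasDerivAt.mul hφ.hasDerivAt.sin).add (hT.hasDerivAt.mul hφ.hasDerivAt.cos)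
  have hy : HasDerivAt (fun s => -(V s * cos (φ s)) + T s * sin (φ s)) _ t :=
    (hV.hasDerivAt.mul hφ.hasDerivAt.cos).neg.add (hT.hasDerivAt.mul hφ.hasDerivAt.sin)
  rw [hx.deriv, hy.deriv]
  linear_combination (T t * deriv φ t - deriv V t) * sin_sq_add_cos_sq (φ t)

end MovingFrame

theorem tangent_angle_evolution_general (X Y sα θ V T : ℝ → ℝ → ℝ)
    (hX : ContDiff ℝ 2 (fun p : ℝ × ℝ => X p.1 p.2))
    (hY : ContDiff ℝ 2 (fun p : ℝ × ℝ => Y p.1 p.2))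
    (hθ : ContDiff ℝ 1 (fun p : ℝ × ℝ => θ p.1 p.2))
    (hV : ContDiff ℝ 1 (fun p : ℝ × ℝ => V p.1 p.2))
    (hT : ContDiff ℝ 1 (fun p : ℝ × ℝ => T p.1 p.2))
    (htanX : ∀ α t : ℝ, deriv (fun a => X a t) α = sα α t * Real.cos (θ α t))
    (htanY : ∀ α t : ℝ, deriv (fun a => Y a t) α = sα α t * Real.sin (θ α t))
    (hmotX : ∀ α t : ℝ, deriv (fun s => X α s) t
      = V α t * Real.sin (θ α t) + T α t * Real.cos (θ α t))
    (hmotY : ∀ α t : ℝ, deriv (fun s => Y α s) t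
      = -(V α t * Real.cos (θ α t)) + T α t * Real.sin (θ α t)) :
    ∀ α t : ℝ, sα α t * deriv (fun s => θ α s) t
      = T α t * deriv (fun a => θ a t) α - deriv (fun a => V a t) α := by
  intro α t
  have hX2 : ContDiff ℝ 2 (uncurry X) := hX
  have hY2 : ContDiff ℝ 2 (uncurry Y) := hY
  have hθd : DifferentiableAt ℝ (uncurry θ) (α, t) := hθ.differentiable one_ne_zero (α, t)
  have hangle := mul_deriv_eq_of_eq_polar (r := sα α) (φ := θ α)
    (hX2.hasDerivAt_deriv_left_right α t).differentiableAt
    (hY2.hasDerivAt_deriv_left_right α t).differentiableAt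
    hθd.hasDerivAt_right.differentiableAt (htanX α) (htanY α)
  rw [hX2.deriv_deriv_comm, hY2.deriv_deriv_comm, funext (hmotX · t), funext (hmotY · t)]
    at hangle
  rw [hangle]
  exact cos_mul_deriv_sub_sin_mul_deriv_eq (V := (V · t)) (T := (T · t)) (φ := (θ · t))
    (hV.differentiable one_ne_zero (α, t)).hasDerivAt_left.differentiableAt
    (hT.differentiable one_ne_zero (α, t)).hasDerivAt_left.differentiableAt
    hθd.hasDerivAt_left.differentiableAt

/-- For an evolving plane curve x(α,t) = (X,Y) with local arclength
s_α = ‖x_α‖ > 0, tangent angle θ (so x_α = s_α(cos θ, sin θ)), and motion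
x_t = V n̂ + T ŝ where ŝ = (cos θ, sin θ) and n̂ = (sin θ, −cos θ), the tangent angle
evolves according to s_α θ_t = T θ_α − V_α. -/
theorem tangent_angle_evolution (X Y sα θ V T : ℝ → ℝ → ℝ)
    (hX : ContDiff ℝ 2 (fun p : ℝ × ℝ => X p.1 p.2))
    (hY : ContDiff ℝ 2 (fun p : ℝ × ℝ => Y p.1 p.2))
    (hθ : ContDiff ℝ 1 (fun p : ℝ × ℝ => θ p.1 p.2))
    (hV : ContDiff ℝ 1 (fun p : ℝ × ℝ => V p.1 p.2))
    (hT : ContDiff ℝ 1 (fun p : ℝ × ℝ => T p.1 p.2))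
    (hs : ∀ α t : ℝ, sα α t =
      Real.sqrt ((deriv (fun a => X a t) α) ^ 2 + (deriv (fun a => Y a t) α) ^ 2))
    (hspos : ∀ α t : ℝ, 0 < sα α t)
    (htanX : ∀ α t : ℝ, deriv (fun a => X a t) α = sα α t * Real.cos (θ α t))
    (htanY : ∀ α t : ℝ, deriv (fun a => Y a t) α = sα α t * Real.sin (θ α t))
    (hmotX : ∀ α t : ℝ, deriv (fun s => X α s) t
      = V α t * Real.sin (θ α t) + T α t * Real.cos (θ α t))
    (hmotY : ∀ α t : ℝ, deriv (fun s => Y α s) t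
      = -(V α t * Real.cos (θ α t)) + T α t * Real.sin (θ α t)) :
    ∀ α t : ℝ, sα α t * deriv (fun s => θ α s) t
      = T α t * deriv (fun a => θ a t) α - deriv (fun a => V a t) α :=
  tangent_angle_evolution_general X Y sα θ V T hX hY hθ hV hT htanX htanY hmotX hmotY
end

section
/- Let x : ℝ → ℝ² be continuously differentiable and 2π-periodic with ‖x'(α)‖ > 0 for all α, and suppose x is injective on [0, 2π). Then for each fixed α, the ratio ‖x(α) − x(α')‖ / (2·|sin((α − α')/2)|), defined for α' with α − α' not an integer multiple of 2π, tends to ‖x'(α)‖ as α' → α. Consequently the function (α, α') ↦ log(‖x(α) − x(α')‖ / (2·|sin((α − α')/2)|)) has a removable singularity on the diagonal, with limiting value log‖x'(α)‖. -/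
open Real Filter Topology

/-! Since `2 |sin (t / 2)| = |t| · |sinc (t / 2)|`, the ratio is the norm of a difference quotient
of `x`, which tends to `‖x'(α)‖`, divided by `|sinc ((α - α') / 2)|`, which tends to `sinc 0 = 1`. -/

lemma two_mul_abs_sin_half (t : ℝ) : 2 * |sin (t / 2)| = |t| * |sinc (t / 2)| := by
  rcases eq_or_ne t 0 with rfl | ht
  · simp
  · rw [sinc_of_ne_zero (div_ne_zero ht two_ne_zero), abs_div, abs_div, abs_two]
    field_simp [abs_ne_zero.mpr ht]

lemma tendsto_norm_sub_div_abs_sub_of_hasDerivAt {E : Type*} [NormedAddCommGroup E]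
    [NormedSpace ℝ E] {f : ℝ → E} {f' : E} {a : ℝ} (hf : HasDerivAt f f' a) :
    Tendsto (fun b => ‖f a - f b‖ / |a - b|) (𝓝[≠] a) (𝓝 ‖f'‖) := by
  refine (hasDerivAt_iff_tendsto_slope.mp hf).norm.congr fun b => ?_
  rw [slope_def_module, norm_smul, norm_inv, norm_sub_rev (f a), abs_sub_comm a,
    Real.norm_eq_abs, inv_mul_eq_div]

lemma tendsto_norm_sub_div_two_mul_abs_sin_half_of_hasDerivAt {E : Type*} [NormedAddCommGroup E]
    [NormedSpace ℝ E] {f : ℝ → E} {f' : E} {a : ℝ} (hf : HasDerivAt f f' a) :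
    Tendsto (fun b => ‖f a - f b‖ / (2 * |sin ((a - b) / 2)|)) (𝓝[≠] a) (𝓝 ‖f'‖) := by
  have hsinc : Tendsto (fun b => |sinc ((a - b) / 2)|) (𝓝[≠] a) (𝓝 1) := by
    have hcont : Continuous fun b => |sinc ((a - b) / 2)| := by
      fun_prop (disch := exact continuous_sinc)
    simpa [sinc_zero] using (hcont.tendsto a).mono_left nhdsWithin_le_nhds
  simpa only [two_mul_abs_sin_half, Pi.div_def, div_div, div_one] using
    (tendsto_norm_sub_div_abs_sub_of_hasDerivAt hf).div hsinc one_ne_zero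

theorem log_kernel_removable_singularity_general (x : ℝ → EuclideanSpace ℝ (Fin 2))
    (hx : ContDiff ℝ 1 x)
    (hreg : ∀ α : ℝ, 0 < ‖deriv x α‖) :
    ∀ α : ℝ,
      Tendsto (fun α' : ℝ => ‖x α - x α'‖ / (2 * |Real.sin ((α - α') / 2)|))
        (nhdsWithin α {α' : ℝ | ∀ n : ℤ, α - α' ≠ n * (2 * π)}) (nhds ‖deriv x α‖)
      ∧ Tendsto (fun α' : ℝ =>
            Real.log (‖x α - x α'‖ / (2 * |Real.sin ((α - α') / 2)|)))
          (nhdsWithin α {α' : ℝ | ∀ n : ℤ, α - α' ≠ n * (2 * π)})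
          (nhds (Real.log ‖deriv x α‖)) := by
  intro α
  have hoff_diag : {α' : ℝ | ∀ n : ℤ, α - α' ≠ n * (2 * π)} ⊆ {α}ᶜ := by
    rintro α' hα' rfl
    simpa using hα' 0
  have hratio := (tendsto_norm_sub_div_two_mul_abs_sin_half_of_hasDerivAt
    (hx.differentiable one_ne_zero α).hasDerivAt).mono_left (nhdsWithin_mono α hoff_diag)
  exact ⟨hratio, hratio.log (hreg α).ne'⟩

/-- For a C¹, 2π-periodic, regular closed curve x injective on [0,2π), the
ratio ‖x(α) − x(α')‖ / (2|sin((α−α')/2)|) (defined when α − α' is not an integer multiple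
of 2π) tends to ‖x'(α)‖ as α' → α, and hence its logarithm has a removable singularity on
the diagonal with limiting value log ‖x'(α)‖. -/
theorem log_kernel_removable_singularity (x : ℝ → EuclideanSpace ℝ (Fin 2))
    (hx : ContDiff ℝ 1 x) (hper : ∀ α : ℝ, x (α + 2 * π) = x α)
    (hreg : ∀ α : ℝ, 0 < ‖deriv x α‖)
    (hinj : Set.InjOn x (Set.Ico 0 (2 * π))) :
    ∀ α : ℝ,
      Tendsto (fun α' : ℝ => ‖x α - x α'‖ / (2 * |Real.sin ((α - α') / 2)|))
        (nhdsWithin α {α' : ℝ | ∀ n : ℤ, α - α' ≠ n * (2 * π)}) (nhds ‖deriv x α‖)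
      ∧ Tendsto (fun α' : ℝ =>
            Real.log (‖x α - x α'‖ / (2 * |Real.sin ((α - α') / 2)|)))
          (nhdsWithin α {α' : ℝ | ∀ n : ℤ, α - α' ≠ n * (2 * π)})
          (nhds (Real.log ‖deriv x α‖)) :=
  log_kernel_removable_singularity_general x hx hreg
end

section
/- Let x : ℝ → ℝ², x(α) = (X(α), Y(α)), be twice continuously differentiable and 2π-periodic with s_α(α) := ‖x'(α)‖ > 0 for all α, and suppose x is injective on [0, 2π). Define the unit normal n(α) = (Y'(α), −X'(α))/s_α(α). Then for each fixed α, the double-layer-type kernel ((x(α) − x(α'))·n(α')·s_α(α')) / (2π·‖x(α) − x(α')‖²) tends, as α' → α, to the finite limit (1/(4π))·(X''(α)·Y'(α) − X'(α)·Y''(α)) / (X'(α)² + Y'(α)²). -/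
open Real Filter Topology

/-!
Write `N(t) = (X α - X t) Y'(t) - (Y α - Y t) X'(t)` for the numerator of the kernel (the factors
`s_α(t)` cancel) and `D(t) = (X α - X t)² + (Y α - Y t)²` for its denominator. Both vanish to second
order at `t = α`: `D(t) / (t - α)² → X'(α)² + Y'(α)²` by differentiability, and since `N(α) = 0` and
`N'(t) = (X α - X t) Y''(t) - (Y α - Y t) X''(t)` also vanishes at `α`, L'Hôpital's rule gives
`N(t) / (t - α)² → (X''(α) Y'(α) - X'(α) Y''(α)) / 2`. Regularity makes the second limit nonzero.
-/

theorem Filter.Tendsto.div_of_tendsto_div_common {ι 𝕜 : Type*} [NormedField 𝕜] {l : Filter ι}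
    {f g h : ι → 𝕜} {a b : 𝕜} (hf : Tendsto (fun i => f i / h i) l (𝓝 a))
    (hg : Tendsto (fun i => g i / h i) l (𝓝 b)) (hb : b ≠ 0) (hh : ∀ᶠ i in l, h i ≠ 0) :
    Tendsto (fun i => f i / g i) l (𝓝 (a / b)) :=
  (hf.div hg hb).congr' <| hh.mono fun _ hi => div_div_div_cancel_right₀ hi _ _

theorem HasDerivAt.tendsto_sub_div_sub {f : ℝ → ℝ} {f' a : ℝ} (hf : HasDerivAt f f' a) :
    Tendsto (fun t => (f t - f a) / (t - a)) (𝓝[≠] a) (𝓝 f') := by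
  simpa only [slope_fun_def_field] using hf.tendsto_slope

section SecondOrderVanishing

variable {X Y X' Y' X'' Y'' : ℝ → ℝ} {α : ℝ}

theorem tendsto_dist_sq_div_sq {a b : ℝ} (hX : HasDerivAt X a α) (hY : HasDerivAt Y b α) :
    Tendsto (fun t => ((X α - X t) ^ 2 + (Y α - Y t) ^ 2) / (t - α) ^ 2) (𝓝[≠] α)
      (𝓝 (a ^ 2 + b ^ 2)) := by
  refine ((hX.tendsto_sub_div_sub.pow 2).add (hY.tendsto_sub_div_sub.pow 2)).congr' ?_
  filter_upwards [self_mem_nhdsWithin] with t (ht : t ≠ α)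
  field_simp [sub_ne_zero.mpr ht]
  ring

theorem tendsto_cross_div_sq (hX : ∀ᶠ t in 𝓝 α, HasDerivAt X (X' t) t)
    (hY : ∀ᶠ t in 𝓝 α, HasDerivAt Y (Y' t) t) (hX' : ∀ᶠ t in 𝓝 α, HasDerivAt X' (X'' t) t)
    (hY' : ∀ᶠ t in 𝓝 α, HasDerivAt Y' (Y'' t) t) (hX'' : ContinuousAt X'' α)
    (hY'' : ContinuousAt Y'' α) :
    Tendsto (fun t => ((X α - X t) * Y' t - (Y α - Y t) * X' t) / (t - α) ^ 2) (𝓝[≠] α)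
      (𝓝 ((X'' α * Y' α - X' α * Y'' α) / 2)) := by
  have hN : ∀ᶠ t in 𝓝 α, HasDerivAt (fun u => (X α - X u) * Y' u - (Y α - Y u) * X' u)
      ((X α - X t) * Y'' t - (Y α - Y t) * X'' t) t := by
    filter_upwards [hX, hY, hX', hY'] with t hXt hYt hX't hY't
    exact (((hXt.const_sub _).mul hY't).sub ((hYt.const_sub _).mul hX't)).congr_deriv (by ring)
  have hsq (t : ℝ) : HasDerivAt (fun u => (u - α) ^ 2) (2 * (t - α)) t := by
    exact (((hasDerivAt_id t).sub_const α).pow 2).congr_deriv (by simp)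
  have hN'_div : Tendsto (fun t => ((X α - X t) * Y'' t - (Y α - Y t) * X'' t) / (2 * (t - α)))
      (𝓝[≠] α) (𝓝 ((X'' α * Y' α - X' α * Y'' α) / 2)) := by
    have hlim : Tendsto (fun t => (-((X t - X α) / (t - α)) * Y'' t
        + (Y t - Y α) / (t - α) * X'' t) / 2) (𝓝[≠] α)
        (𝓝 ((X'' α * Y' α - X' α * Y'' α) / 2)) := by
      convert (((hX.self_of_nhds.tendsto_sub_div_sub.neg).mul
        (hY''.tendsto.mono_left nhdsWithin_le_nhds)).add
        (hY.self_of_nhds.tendsto_sub_div_sub.mul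
          (hX''.tendsto.mono_left nhdsWithin_le_nhds))).div_const 2 using 2
      ring
    refine hlim.congr' ?_
    filter_upwards [self_mem_nhdsWithin] with t (ht : t ≠ α)
    field_simp [sub_ne_zero.mpr ht]
    ring
  refine HasDerivAt.lhopital_zero_nhdsNE (nhdsWithin_le_nhds hN)
    (Eventually.of_forall hsq) ?_ ?_ ?_ hN'_div
  · filter_upwards [self_mem_nhdsWithin] with t (ht : t ≠ α)
    exact mul_ne_zero two_ne_zero (sub_ne_zero.mpr ht)
  · simpa using (hN.self_of_nhds.continuousAt.tendsto).mono_left nhdsWithin_le_nhds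
  · simpa using ((hsq α).continuousAt.tendsto).mono_left nhdsWithin_le_nhds

end SecondOrderVanishing

theorem double_layer_kernel_diagonal_limit_general (X Y : ℝ → ℝ)
    (hX : ContDiff ℝ 2 X) (hY : ContDiff ℝ 2 Y)
    (sα : ℝ → ℝ)
    (hs : ∀ α : ℝ, sα α = Real.sqrt ((deriv X α) ^ 2 + (deriv Y α) ^ 2))
    (hspos : ∀ α : ℝ, 0 < sα α) :
    ∀ α : ℝ,
      Tendsto (fun α' : ℝ =>
          ((X α - X α') * (deriv Y α' / sα α') + (Y α - Y α') * (-(deriv X α') / sα α'))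
              * sα α'
            / (2 * π * ((X α - X α') ^ 2 + (Y α - Y α') ^ 2)))
        (nhdsWithin α {α}ᶜ)
        (nhds ((1 / (4 * π)) *
          (deriv (deriv X) α * deriv Y α - deriv X α * deriv (deriv Y) α) /
            ((deriv X α) ^ 2 + (deriv Y α) ^ 2))) := by
  intro α
  have hX1 (t : ℝ) : HasDerivAt X (deriv X t) t := (hX.differentiable two_ne_zero t).hasDerivAt
  have hY1 (t : ℝ) : HasDerivAt Y (deriv Y t) t := (hY.differentiable two_ne_zero t).hasDerivAt
  have hX2 : ContDiff ℝ 1 (deriv X) := hX.deriv'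
  have hY2 : ContDiff ℝ 1 (deriv Y) := hY.deriv'
  have hregular : deriv X α ^ 2 + deriv Y α ^ 2 ≠ 0 := (sqrt_pos.mp (hs α ▸ hspos α)).ne'
  have hnum := tendsto_cross_div_sq (α := α) (.of_forall hX1) (.of_forall hY1)
    (.of_forall fun t => (hX2.differentiable one_ne_zero t).hasDerivAt)
    (.of_forall fun t => (hY2.differentiable one_ne_zero t).hasDerivAt)
    (hX2.continuous_deriv le_rfl).continuousAt (hY2.continuous_deriv le_rfl).continuousAt
  have hden : Tendsto (fun t => 2 * π * ((X α - X t) ^ 2 + (Y α - Y t) ^ 2) / (t - α) ^ 2)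
      (𝓝[≠] α) (𝓝 (2 * π * (deriv X α ^ 2 + deriv Y α ^ 2))) := by
    simpa only [mul_div_assoc] using (tendsto_dist_sq_div_sq (hX1 α) (hY1 α)).const_mul (2 * π)
  convert hnum.div_of_tendsto_div_common hden (mul_ne_zero (by positivity) hregular)
    (eventually_nhdsWithin_of_forall fun t ht => pow_ne_zero 2 (sub_ne_zero.mpr ht)) using 2
  · rename_i t
    field_simp [(hspos t).ne']
    ring
  · field_simp
    ring

/-- For a C², 2π-periodic, regular closed plane curve x = (X, Y) injective on
[0,2π), with unit normal n = (Y', −X')/s_α where s_α = ‖x'‖, the double-layer-type kernel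
((x(α) − x(α'))·n(α')·s_α(α')) / (2π ‖x(α) − x(α')‖²) tends, as α' → α, to
(1/(4π))·(X'' Y' − X' Y'')/(X'² + Y'²) evaluated at α. -/
theorem double_layer_kernel_diagonal_limit (X Y : ℝ → ℝ)
    (hX : ContDiff ℝ 2 X) (hY : ContDiff ℝ 2 Y)
    (hXper : ∀ α : ℝ, X (α + 2 * π) = X α) (hYper : ∀ α : ℝ, Y (α + 2 * π) = Y α)
    (sα : ℝ → ℝ)
    (hs : ∀ α : ℝ, sα α = Real.sqrt ((deriv X α) ^ 2 + (deriv Y α) ^ 2))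
    (hspos : ∀ α : ℝ, 0 < sα α)
    (hinj : Set.InjOn (fun α => (X α, Y α)) (Set.Ico 0 (2 * π))) :
    ∀ α : ℝ,
      Tendsto (fun α' : ℝ =>
          ((X α - X α') * (deriv Y α' / sα α') + (Y α - Y α') * (-(deriv X α') / sα α'))
              * sα α'
            / (2 * π * ((X α - X α') ^ 2 + (Y α - Y α') ^ 2)))
        (nhdsWithin α {α}ᶜ)
        (nhds ((1 / (4 * π)) *
          (deriv (deriv X) α * deriv Y α - deriv X α * deriv (deriv Y) α) /
            ((deriv X α) ^ 2 + (deriv Y α) ^ 2))) :=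
  double_layer_kernel_diagonal_limit_general X Y hX hY sα hs hspos
end
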